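/- Let n ≥ 1 and k ≥ 0 with k ≠ n, and let ρ be C¹ and 2π-periodic with Fourier coefficients a_j, b_j (with convention a_{−j} = −a_j, b_{−j} = b_j for j > 0). Define 𝓚 = (1/√π)∫ρ' sin kθ cos nθ, 𝓛 = (1/√π)∫ρ cos kθ cos nθ, 𝓜 = (1/√π)∫ρ' cos kθ cos nθ, 𝓝 = (1/√π)∫ρ sin kθ cos nθ, 𝓣 = (1/√π)∫ρ' sin kθ sin nθ, 𝓤 = (1/√π)∫ρ cos kθ sin nθ, 𝓥 = (1/√π)∫ρ' cos kθ sin nθ, 𝓦 = (1/√π)∫ρ sin kθ sin nθ (all integrals over [0,2π]). Then for any real constant β = k−n−1: (𝓚+β𝓛)(−𝓤−𝓜) + (−𝓜+β𝓝)(−𝓦−𝓚) − (𝓣+β𝓤)(−𝓛+𝓥) − (−𝓥+β𝓦)(−𝓝+𝓣) = 0. -/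

import Mathlib

open Real MeasureTheory intervalIntegral

/-! The four integrals against `ρ'` are reduced to those against `ρ` by integrating by parts
over a period: `𝓚 = -k 𝓛 + n 𝓦`, `𝓜 = k 𝓝 + n 𝓤`, `𝓣 = -k 𝓤 - n 𝓝` and
`𝓥 = k 𝓦 - n 𝓛`. The boundary terms vanish: in three of them a factor `sin (jθ)` vanishes at
`0` and `2π`, and in the `cos (kθ) cos (nθ)` one `ρ (2π) = ρ 0`.
After substituting, the identity is a polynomial identity in `𝓛, 𝓝, 𝓤, 𝓦, k, n`. -/

theorem integral_deriv_mul_mul_eq_neg {a b : ℝ} {u u' f f' g g' : ℝ → ℝ}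
    (hu : ∀ x, HasDerivAt u (u' x) x) (hf : ∀ x, HasDerivAt f (f' x) x)
    (hg : ∀ x, HasDerivAt g (g' x) x) (hu' : Continuous u') (hf' : Continuous f')
    (hg' : Continuous g') (hb : u b * f b * g b = u a * f a * g a) :
    ∫ x in a..b, u' x * f x * g x =
      -(∫ x in a..b, u x * f' x * g x) - ∫ x in a..b, u x * f x * g' x := by
  have hu_cont : Continuous u := continuous_iff_continuousAt.2 fun x => (hu x).continuousAt
  have hf_cont : Continuous f := continuous_iff_continuousAt.2 fun x => (hf x).continuousAt
  have hg_cont : Continuous g := continuous_iff_continuousAt.2 fun x => (hg x).continuousAt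
  have parts := intervalIntegral.integral_deriv_mul_eq_sub (a := a) (b := b) (fun x _ => hu x)
    (fun x _ => (hf x).mul (hg x)) (hu'.intervalIntegrable _ _)
    (((hf'.mul hg_cont).add (hf_cont.mul hg')).intervalIntegrable _ _)
  simp only [Pi.mul_apply, mul_add, ← mul_assoc] at parts
  rw [intervalIntegral.integral_add (by apply Continuous.intervalIntegrable; fun_prop)
      (by apply Continuous.intervalIntegrable; fun_prop),
    intervalIntegral.integral_add (by apply Continuous.intervalIntegrable; fun_prop)
      (by apply Continuous.intervalIntegrable; fun_prop)] at parts
  linarith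

theorem integral_mul_const_mul_mul (u f g : ℝ → ℝ) (a b c : ℝ) :
    ∫ x in a..b, u x * (c * f x) * g x = c * ∫ x in a..b, u x * f x * g x := by
  rw [← intervalIntegral.integral_const_mul]
  congr 1 with x
  ring

theorem integral_mul_mul_const_mul (u f g : ℝ → ℝ) (a b c : ℝ) :
    ∫ x in a..b, u x * f x * (c * g x) = c * ∫ x in a..b, u x * f x * g x := by
  rw [← intervalIntegral.integral_const_mul]
  congr 1 with x
  ring

theorem hasDerivAt_sin_const_mul (c x : ℝ) :
    HasDerivAt (fun x => sin (c * x)) (c * cos (c * x)) x := by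
  simpa [mul_comm] using ((hasDerivAt_id x).const_mul c).sin

theorem hasDerivAt_cos_const_mul (c x : ℝ) :
    HasDerivAt (fun x => cos (c * x)) (-c * sin (c * x)) x := by
  simpa [mul_comm] using ((hasDerivAt_id x).const_mul c).cos

theorem sin_natCast_mul_two_pi (n : ℕ) : sin (n * (2 * π)) = 0 := by
  simpa using sin_periodic.nat_mul_eq n

section IntegrationByPartsOverPeriod

variable {ρ ρ' : ℝ → ℝ} (hd : ∀ θ, HasDerivAt ρ (ρ' θ) θ) (hc : Continuous ρ') (k n : ℕ)
include hd hc

theorem integral_deriv_mul_sin_mul_cos :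
    ∫ θ in (0:ℝ)..2 * π, ρ' θ * sin (k * θ) * cos (n * θ) =
      -k * (∫ θ in (0:ℝ)..2 * π, ρ θ * cos (k * θ) * cos (n * θ)) +
        n * ∫ θ in (0:ℝ)..2 * π, ρ θ * sin (k * θ) * sin (n * θ) := by
  rw [integral_deriv_mul_mul_eq_neg hd (hasDerivAt_sin_const_mul k) (hasDerivAt_cos_const_mul n)
    hc (by fun_prop) (by fun_prop) (by simp [sin_natCast_mul_two_pi]),
    integral_mul_const_mul_mul, integral_mul_mul_const_mul]
  ring

theorem integral_deriv_mul_cos_mul_cos (hper : Function.Periodic ρ (2 * π)) :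
    ∫ θ in (0:ℝ)..2 * π, ρ' θ * cos (k * θ) * cos (n * θ) =
      k * (∫ θ in (0:ℝ)..2 * π, ρ θ * sin (k * θ) * cos (n * θ)) +
        n * ∫ θ in (0:ℝ)..2 * π, ρ θ * cos (k * θ) * sin (n * θ) := by
  rw [integral_deriv_mul_mul_eq_neg hd (hasDerivAt_cos_const_mul k) (hasDerivAt_cos_const_mul n)
    hc (by fun_prop) (by fun_prop) (by simpa [cos_nat_mul_two_pi] using hper 0),
    integral_mul_const_mul_mul, integral_mul_mul_const_mul]
  ring

theorem integral_deriv_mul_sin_mul_sin :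
    ∫ θ in (0:ℝ)..2 * π, ρ' θ * sin (k * θ) * sin (n * θ) =
      -k * (∫ θ in (0:ℝ)..2 * π, ρ θ * cos (k * θ) * sin (n * θ)) -
        n * ∫ θ in (0:ℝ)..2 * π, ρ θ * sin (k * θ) * cos (n * θ) := by
  rw [integral_deriv_mul_mul_eq_neg hd (hasDerivAt_sin_const_mul k) (hasDerivAt_sin_const_mul n)
    hc (by fun_prop) (by fun_prop) (by simp [sin_natCast_mul_two_pi]),
    integral_mul_const_mul_mul, integral_mul_mul_const_mul]
  ring

theorem integral_deriv_mul_cos_mul_sin :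
    ∫ θ in (0:ℝ)..2 * π, ρ' θ * cos (k * θ) * sin (n * θ) =
      k * (∫ θ in (0:ℝ)..2 * π, ρ θ * sin (k * θ) * sin (n * θ)) -
        n * ∫ θ in (0:ℝ)..2 * π, ρ θ * cos (k * θ) * cos (n * θ) := by
  rw [integral_deriv_mul_mul_eq_neg hd (hasDerivAt_cos_const_mul k) (hasDerivAt_sin_const_mul n)
    hc (by fun_prop) (by fun_prop) (by simp [sin_natCast_mul_two_pi]),
    integral_mul_const_mul_mul, integral_mul_mul_const_mul]
  ring

end IntegrationByPartsOverPeriod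

theorem M2_symmetric_identity_general (ρ ρ' : ℝ → ℝ) (n k : ℕ)
    (hd : ∀ θ : ℝ, HasDerivAt ρ (ρ' θ) θ)
    (hc : Continuous ρ')
    (hper : Function.Periodic ρ (2 * π)) :
    let K := (1 / Real.sqrt π) *
      (∫ θ in (0:ℝ)..(2 * π), ρ' θ * Real.sin (k * θ) * Real.cos (n * θ))
    let L := (1 / Real.sqrt π) *
      (∫ θ in (0:ℝ)..(2 * π), ρ θ * Real.cos (k * θ) * Real.cos (n * θ))
    let M := (1 / Real.sqrt π) *
      (∫ θ in (0:ℝ)..(2 * π), ρ' θ * Real.cos (k * θ) * Real.cos (n * θ))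
    let N := (1 / Real.sqrt π) *
      (∫ θ in (0:ℝ)..(2 * π), ρ θ * Real.sin (k * θ) * Real.cos (n * θ))
    let T := (1 / Real.sqrt π) *
      (∫ θ in (0:ℝ)..(2 * π), ρ' θ * Real.sin (k * θ) * Real.sin (n * θ))
    let U := (1 / Real.sqrt π) *
      (∫ θ in (0:ℝ)..(2 * π), ρ θ * Real.cos (k * θ) * Real.sin (n * θ))
    let V := (1 / Real.sqrt π) *
      (∫ θ in (0:ℝ)..(2 * π), ρ' θ * Real.cos (k * θ) * Real.sin (n * θ))
    let W := (1 / Real.sqrt π) *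
      (∫ θ in (0:ℝ)..(2 * π), ρ θ * Real.sin (k * θ) * Real.sin (n * θ))
    let β : ℝ := (k : ℝ) - (n : ℝ) - 1
    (K + β * L) * (-U - M) + (-M + β * N) * (-W - K)
      - (T + β * U) * (-L + V) - (-V + β * W) * (-N + T) = 0 := by
  intro K L M N T U V W β
  simp only [K, M, T, V, β, integral_deriv_mul_sin_mul_cos hd hc,
    integral_deriv_mul_cos_mul_cos hd hc k n hper, integral_deriv_mul_sin_mul_sin hd hc,
    integral_deriv_mul_cos_mul_sin hd hc]
  ring

/-- The key identity showing that the second-order perturbation matrix M_n^{(2)} is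
symmetric: with β = k−n−1 and the integral constants 𝓚,𝓛,𝓜,𝓝,𝓣,𝓤,𝓥,𝓦,
(𝓚+β𝓛)(−𝓤−𝓜) + (−𝓜+β𝓝)(−𝓦−𝓚) − (𝓣+β𝓤)(−𝓛+𝓥) − (−𝓥+β𝓦)(−𝓝+𝓣) = 0. -/
theorem M2_symmetric_identity (ρ ρ' : ℝ → ℝ) (n k : ℕ) (hn : 1 ≤ n) (hkn : k ≠ n)
    (hd : ∀ θ : ℝ, HasDerivAt ρ (ρ' θ) θ)
    (hc : Continuous ρ')
    (hper : Function.Periodic ρ (2 * π)) :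
    let K := (1 / Real.sqrt π) *
      (∫ θ in (0:ℝ)..(2 * π), ρ' θ * Real.sin (k * θ) * Real.cos (n * θ))
    let L := (1 / Real.sqrt π) *
      (∫ θ in (0:ℝ)..(2 * π), ρ θ * Real.cos (k * θ) * Real.cos (n * θ))
    let M := (1 / Real.sqrt π) *
      (∫ θ in (0:ℝ)..(2 * π), ρ' θ * Real.cos (k * θ) * Real.cos (n * θ))
    let N := (1 / Real.sqrt π) *
      (∫ θ in (0:ℝ)..(2 * π), ρ θ * Real.sin (k * θ) * Real.cos (n * θ))
    let T := (1 / Real.sqrt π) *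
      (∫ θ in (0:ℝ)..(2 * π), ρ' θ * Real.sin (k * θ) * Real.sin (n * θ))
    let U := (1 / Real.sqrt π) *
      (∫ θ in (0:ℝ)..(2 * π), ρ θ * Real.cos (k * θ) * Real.sin (n * θ))
    let V := (1 / Real.sqrt π) *
      (∫ θ in (0:ℝ)..(2 * π), ρ' θ * Real.cos (k * θ) * Real.sin (n * θ))
    let W := (1 / Real.sqrt π) *
      (∫ θ in (0:ℝ)..(2 * π), ρ θ * Real.sin (k * θ) * Real.sin (n * θ))
    let β : ℝ := (k : ℝ) - (n : ℝ) - 1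
    (K + β * L) * (-U - M) + (-M + β * N) * (-W - K)
      - (T + β * U) * (-L + V) - (-V + β * W) * (-N + T) = 0 :=
  M2_symmetric_identity_general ρ ρ' n k hd hc hper
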